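/- arXiv:2511.18041 — 2 statements merged into one kernel-verified Lean document; each statement's English description precedes it below -/
import Mathlib

section
/- Let f ∈ HL₀(B_X, Y). Then Im_L(f) is relatively compact in Y if and only if f^t : Y* → HL₀(B_X) is continuous from the bounded-weak* topology on Y* to the norm topology of HL₀(B_X). -/
open Metric Set Filter Topology

noncomputable section

universe u

def LipImage {X Y : Type*} [NormedAddCommGroup X] [NormedSpace ℂ X]
    [NormedAddCommGroup Y] [NormedSpace ℂ Y] (f : X → Y) : Set Y :=
  {v | ∃ x ∈ ball (0 : X) 1, ∃ y ∈ ball (0 : X) 1, x ≠ y ∧ v = ‖x - y‖⁻¹ • (f x - f y)}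

def MemHL {X Y : Type*} [NormedAddCommGroup X] [NormedSpace ℂ X]
    [NormedAddCommGroup Y] [NormedSpace ℂ Y] (f : X → Y) : Prop :=
  f 0 = 0 ∧ DifferentiableOn ℂ f (ball (0 : X) 1) ∧
    ∃ C : ℝ, ∀ x ∈ ball (0 : X) 1, ∀ y ∈ ball (0 : X) 1, ‖f x - f y‖ ≤ C * ‖x - y‖

def LipNorm {X Y : Type*} [NormedAddCommGroup X] [NormedSpace ℂ X]
    [NormedAddCommGroup Y] [NormedSpace ℂ Y] (f : X → Y) : ℝ :=
  sSup ((fun p : X × X => ‖f p.1 - f p.2‖ / ‖p.1 - p.2‖) ''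
    {p : X × X | p.1 ∈ ball (0 : X) 1 ∧ p.2 ∈ ball (0 : X) 1 ∧ p.1 ≠ p.2})

/-!
Write `S = Im_L(f)` and `T φ = linC (φ ∘ f)`, the transpose `f^t`. Since `linC` is additive on
`HL₀` and isometric for the Lipschitz norm, `‖T ξ - T η‖ = sup_{v ∈ S} ‖(ξ - η) v‖`, so the theorem
says that a bounded set `S` of a Banach space is relatively compact iff uniform convergence on `S`
is weak*-continuous on bounded sets of the dual.

If `closure S` is compact, weak* convergence on a ball of the dual is uniform on `closure S`,
because the functionals of the ball are equi-Lipschitz (Ascoli). Conversely, `T` maps the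
weak*-compact dual unit ball onto a norm-compact set, which gives finitely many functionals `η`
approximating every `ξ` of the unit ball uniformly on `S`. Evaluation at them maps `S` into a
finite-dimensional space, and a norming functional (Hahn–Banach) turns closeness there into
closeness in norm, so `S` is totally bounded.
-/

theorem IsCompact.exists_finite_forall_dist_lt {α β : Type*} [TopologicalSpace α]
    [PseudoMetricSpace β] {s : Set α} (hs : IsCompact s) {T : α → β} (hT : ContinuousOn T s)
    {ε : ℝ} (hε : 0 < ε) : ∃ t ⊆ s, t.Finite ∧ ∀ x ∈ s, ∃ y ∈ t, dist (T x) (T y) < ε := by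
  obtain ⟨t, hts, htf, hcover⟩ := exists_subset_image_finite_and.mp
    (finite_approx_of_totallyBounded (hs.image_of_continuousOn hT).totallyBounded ε hε)
  refine ⟨t, hts, htf, fun x hx => ?_⟩
  simpa using hcover (mem_image_of_mem T hx)

section DualBall

variable {𝕜 E : Type*}

theorem WeakDual.tendstoUniformlyOn_nhdsWithin_closedBall [NontriviallyNormedField 𝕜]
    [SeminormedAddCommGroup E] [NormedSpace 𝕜 E] {K : Set E} (hK : IsCompact K) {r : ℝ}
    {φ₀ : WeakDual 𝕜 E} (hφ₀ : φ₀ ∈ StrongDual.toWeakDual '' closedBall (0 : StrongDual 𝕜 E) r) :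
    TendstoUniformlyOn (fun φ : WeakDual 𝕜 E => ⇑φ) φ₀
      (𝓝[StrongDual.toWeakDual '' closedBall (0 : StrongDual 𝕜 E) r] φ₀) K := by
  set B := StrongDual.toWeakDual '' closedBall (0 : StrongDual 𝕜 E) r
  lift φ₀ to B using hφ₀
  let F : B → E → 𝕜 := fun φ => ⇑(φ : WeakDual 𝕜 E)
  have hF : Equicontinuous F := by
    refine (LipschitzWith.uniformEquicontinuous F r.toNNReal
      fun ⟨_, ξ, hξ, rfl⟩ => ?_).equicontinuous
    rw [mem_closedBall_zero_iff] at hξ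
    exact ξ.lipschitz.weaken (by simpa [← NNReal.coe_le_coe] using le_max_of_le_left hξ)
  have hpt : Continuous ((⋃₀ {K}).domRestrict ∘ F) :=
    continuous_pi fun v => (WeakDual.eval_continuous _).comp continuous_subtype_val
  have hunif := UniformOnFun.tendsto_iff_tendstoUniformlyOn.mp
    ((EquicontinuousOn.tendsto_uniformOnFun_iff_pi' (by simpa using hK)
      (fun _ _ => hF.equicontinuousOn _) _ _).mpr (hpt.tendsto φ₀)) K rfl
  rw [← map_nhds_subtype_val, Metric.tendstoUniformlyOn_iff]
  exact Metric.tendstoUniformlyOn_iff.mp hunif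

theorem continuousOn_closedBall_of_isCompact_closure [NontriviallyNormedField 𝕜]
    [SeminormedAddCommGroup E] [NormedSpace 𝕜 E] {Z : Type*} [SeminormedAddCommGroup Z]
    {S : Set E} (hS : IsCompact (closure S)) {T : WeakDual 𝕜 E → Z}
    (hT : ∀ ξ η : StrongDual 𝕜 E, ∀ ε, 0 ≤ ε → (∀ v ∈ S, ‖(ξ - η) v‖ ≤ ε) →
      ‖T (StrongDual.toWeakDual ξ) - T (StrongDual.toWeakDual η)‖ ≤ ε) (r : ℝ) :
    ContinuousOn T (StrongDual.toWeakDual '' closedBall (0 : StrongDual 𝕜 E) r) := by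
  intro φ₀ hφ₀
  rw [ContinuousWithinAt, Metric.tendsto_nhds]
  intro ε hε
  filter_upwards [Metric.tendstoUniformlyOn_iff.mp
    (WeakDual.tendstoUniformlyOn_nhdsWithin_closedBall hS hφ₀) (ε / 2) (half_pos hε)] with φ hφ
  calc dist (T φ) (T φ₀) ≤ ε / 2 := by
        rw [dist_eq_norm]
        refine hT (WeakDual.toStrongDual φ) (WeakDual.toStrongDual φ₀) _ (half_pos hε).le
          fun v hv => ?_
        simpa [dist_eq_norm'] using (hφ v (subset_closure hv)).le
    _ < ε := half_lt_self hε

theorem totallyBounded_of_forall_exists_finite_dual_approx [RCLike 𝕜]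
    [NormedAddCommGroup E] [NormedSpace 𝕜 E] {S : Set E} (hS : Bornology.IsBounded S)
    (h : ∀ ε > 0, ∃ F : Set (StrongDual 𝕜 E), F.Finite ∧
      ∀ ξ : StrongDual 𝕜 E, ‖ξ‖ ≤ 1 → ∃ η ∈ F, ∀ v ∈ S, ‖ξ v - η v‖ < ε) :
    TotallyBounded S := by
  rw [Metric.totallyBounded_iff]
  intro ε hε
  obtain ⟨F, hF, happrox⟩ := h (ε / 3) (by positivity)
  have := hF.fintype
  let L : E →L[𝕜] (F → 𝕜) := ContinuousLinearMap.pi fun η => (η : StrongDual 𝕜 E)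
  have hLS : TotallyBounded (L '' S) :=
    (L.lipschitz.isBounded_image hS).isCompact_closure.totallyBounded.subset subset_closure
  obtain ⟨t, htS, htf, hcover⟩ := exists_subset_image_finite_and.mp
    (finite_approx_of_totallyBounded hLS (ε / 3) (by positivity))
  refine ⟨t, htf, fun v hv => ?_⟩
  obtain ⟨w, hwt, hLvw⟩ : ∃ w ∈ t, dist (L v) (L w) < ε / 3 := by
    simpa using hcover (mem_image_of_mem L hv)
  obtain ⟨g, hg, hgvw⟩ := exists_dual_vector'' 𝕜 (v - w)
  obtain ⟨η, hηF, hη⟩ := happrox g hg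
  have hηvw : ‖η v - η w‖ < ε / 3 := by
    simpa [L, dist_eq_norm] using (dist_le_pi_dist (L v) (L w) ⟨η, hηF⟩).trans_lt hLvw
  rw [mem_iUnion₂]
  refine ⟨w, hwt, ?_⟩
  calc dist v w = ‖g (v - w)‖ := by simp [hgvw, dist_eq_norm]
    _ = ‖(g v - η v) + (η v - η w) - (g w - η w)‖ := by rw [map_sub]; abel_nf
    _ ≤ ‖g v - η v‖ + ‖η v - η w‖ + ‖g w - η w‖ := norm_sub_le_of_le (norm_add_le _ _) le_rfl
    _ < ε / 3 + ε / 3 + ε / 3 := by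
      gcongr
      exacts [hη v hv, hη w (htS hwt)]
    _ = ε := by ring

theorem isCompact_closure_of_continuousOn_closedBall [RCLike 𝕜] [NormedAddCommGroup E]
    [NormedSpace 𝕜 E] [CompleteSpace E] {Z : Type*} [SeminormedAddCommGroup Z] {S : Set E}
    (hS : Bornology.IsBounded S) {T : WeakDual 𝕜 E → Z}
    (hT : ∀ ξ η : StrongDual 𝕜 E, ∀ v ∈ S,
      ‖(ξ - η) v‖ ≤ ‖T (StrongDual.toWeakDual ξ) - T (StrongDual.toWeakDual η)‖)
    (hcont : ContinuousOn T (StrongDual.toWeakDual '' closedBall (0 : StrongDual 𝕜 E) 1)) :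
    IsCompact (closure S) := by
  refine (TotallyBounded.closure ?_).isCompact_of_isClosed isClosed_closure
  refine totallyBounded_of_forall_exists_finite_dual_approx (𝕜 := 𝕜) hS fun ε hε => ?_
  have hB : IsCompact (StrongDual.toWeakDual '' closedBall (0 : StrongDual 𝕜 E) 1) := by
    rw [StrongDual.toWeakDual.image_eq_preimage_symm]
    exact WeakDual.isCompact_closedBall 0 1
  obtain ⟨t, -, htf, happrox⟩ := hB.exists_finite_forall_dist_lt hcont hε
  refine ⟨WeakDual.toStrongDual '' t, htf.image _, fun ξ hξ => ?_⟩
  obtain ⟨φ, hφt, hφ⟩ := happrox _ (mem_image_of_mem _ (mem_closedBall_zero_iff.mpr hξ))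
  refine ⟨_, mem_image_of_mem _ hφt, fun v hv => ?_⟩
  calc ‖ξ v - WeakDual.toStrongDual φ v‖ = ‖(ξ - WeakDual.toStrongDual φ) v‖ := rfl
    _ ≤ dist (T (StrongDual.toWeakDual ξ)) (T φ) := (hT _ _ v hv).trans_eq (dist_eq_norm _ _).symm
    _ < ε := hφ

end DualBall

section HL

variable {X Y Z : Type*} [NormedAddCommGroup X] [NormedSpace ℂ X] [NormedAddCommGroup Y]
  [NormedSpace ℂ Y] [NormedAddCommGroup Z] [NormedSpace ℂ Z]

theorem MemHL.clm_comp {f : X → Y} (hf : MemHL f) (L : Y →L[ℂ] Z) : MemHL (fun x => L (f x)) := by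
  obtain ⟨hf0, hfd, C, hC⟩ := hf
  refine ⟨by simp [hf0], L.differentiable.comp_differentiableOn hfd, ‖L‖ * C, fun x hx y hy => ?_⟩
  calc ‖L (f x) - L (f y)‖ = ‖L (f x - f y)‖ := by rw [map_sub]
    _ ≤ ‖L‖ * ‖f x - f y‖ := L.le_opNorm _
    _ ≤ ‖L‖ * (C * ‖x - y‖) := by gcongr; exact hC x hx y hy
    _ = ‖L‖ * C * ‖x - y‖ := (mul_assoc _ _ _).symm

theorem isBounded_lipImage {f : X → Y} {C : ℝ}
    (hC : ∀ x ∈ ball (0 : X) 1, ∀ y ∈ ball (0 : X) 1, ‖f x - f y‖ ≤ C * ‖x - y‖) :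
    Bornology.IsBounded (LipImage f) := by
  refine isBounded_iff_forall_norm_le.mpr ⟨C, ?_⟩
  rintro _ ⟨x, hx, y, hy, hxy, rfl⟩
  have hpos : 0 < ‖x - y‖ := norm_pos_iff.mpr (sub_ne_zero.mpr hxy)
  rw [norm_smul, norm_inv, norm_norm, inv_mul_le_iff₀ hpos, mul_comm]
  exact hC x hx y hy

theorem lipNorm_clm_comp (f : X → Y) (L : Y →L[ℂ] Z) :
    LipNorm (fun x => L (f x)) = sSup ((fun v => ‖L v‖) '' LipImage f) := by
  have hpairs : LipImage f = (fun p : X × X => ‖p.1 - p.2‖⁻¹ • (f p.1 - f p.2)) ''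
      {p : X × X | p.1 ∈ ball (0 : X) 1 ∧ p.2 ∈ ball (0 : X) 1 ∧ p.1 ≠ p.2} := by
    ext v
    simp only [LipImage, mem_image, Prod.exists]
    grind
  rw [LipNorm, hpairs, image_image]
  congr 2
  ext p
  rw [L.map_smul_of_tower, norm_smul, norm_inv, norm_norm, ← map_sub, div_eq_inv_mul]

theorem linC_sub {G : Type*} [NormedAddCommGroup G] [NormedSpace ℂ G] {δX : X → G}
    (hdense : Dense (Submodule.span ℂ (δX '' ball (0 : X) 1) : Set G))
    {linC : (X → ℂ) → (G →L[ℂ] ℂ)}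
    (hlinC : ∀ g : X → ℂ, MemHL g → ∀ x ∈ ball (0 : X) 1, linC g (δX x) = g x)
    {g₁ g₂ : X → ℂ} (h₁ : MemHL g₁) (h₂ : MemHL g₂) (h : MemHL (g₁ - g₂)) :
    linC (g₁ - g₂) = linC g₁ - linC g₂ := by
  refine ContinuousLinearMap.ext_on hdense ?_
  rintro _ ⟨x, hx, rfl⟩
  simp [hlinC _ h x hx, hlinC _ h₁ x hx, hlinC _ h₂ x hx]

end HL

/-- `linC` stands for `Λ_X : HL₀(B_X) ≃ G₀(B_X)*`, so the map below is `f^t`. A map is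
bw*-continuous iff its restriction to every bounded set is weak*-continuous, hence the
quantification over closed balls. -/
theorem compactHL_iff_transpose_bwstar_norm_continuous_general {X Y G : Type*}
    [NormedAddCommGroup X] [NormedSpace ℂ X]
    [NormedAddCommGroup Y] [NormedSpace ℂ Y] [CompleteSpace Y]
    [NormedAddCommGroup G] [NormedSpace ℂ G]
    (δX : X → G)
    (hdense : Dense (Submodule.span ℂ (δX '' ball (0 : X) 1) : Set G))
    (linC : (X → ℂ) → (G →L[ℂ] ℂ))
    (hlinC : ∀ g : X → ℂ, MemHL g → ∀ x ∈ ball (0 : X) 1, linC g (δX x) = g x)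
    (hlinCnorm : ∀ g : X → ℂ, MemHL g → ‖linC g‖ = LipNorm g)
    (f : X → Y) (hf : MemHL f) :
    IsCompact (closure (LipImage f)) ↔
      ∀ r : ℝ, ContinuousOn (fun φ : WeakDual ℂ Y => linC (fun x => φ (f x)))
        (StrongDual.toWeakDual '' closedBall (0 : StrongDual ℂ Y) r) := by
  have hnorm : ∀ ξ η : StrongDual ℂ Y, ‖linC (fun x => ξ (f x)) - linC (fun x => η (f x))‖ =
      sSup ((fun v => ‖(ξ - η) v‖) '' LipImage f) := by
    intro ξ η
    have hsub : (fun x => (ξ - η) (f x)) = (fun x => ξ (f x)) - (fun x => η (f x)) := rfl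
    rw [← linC_sub hdense hlinC (hf.clm_comp ξ) (hf.clm_comp η) (hsub ▸ hf.clm_comp (ξ - η)),
      ← hsub, hlinCnorm _ (hf.clm_comp (ξ - η)), lipNorm_clm_comp]
  obtain ⟨-, -, C, hC⟩ := hf
  have hbdd := isBounded_lipImage hC
  constructor
  · refine fun hK => continuousOn_closedBall_of_isCompact_closure hK fun ξ η ε hε hle => ?_
    exact (hnorm ξ η).trans_le (Real.sSup_le (by rintro _ ⟨v, hv, rfl⟩; exact hle v hv) hε)
  · refine fun hcont =>
      isCompact_closure_of_continuousOn_closedBall hbdd (fun ξ η v hv => ?_) (hcont 1)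
    have hbddAbove :=
      ((lipschitzWith_one_norm.comp (ξ - η).lipschitz).isBounded_image hbdd).bddAbove
    exact (le_csSup hbddAbove (mem_image_of_mem _ hv)).trans_eq (hnorm ξ η).symm

/-- Im_L(f) is relatively compact in Y iff the transpose
f^t : Y* → HL₀(B_X) is continuous from the bounded-weak* topology on Y* to the norm
topology.  HL₀(B_X) is identified with G₀(B_X)* via the canonical isometric
isomorphism Λ_X (hypothesized through linC).  Since the bounded-weak* topology is
the finest topology agreeing with w* on bounded sets, bw*-to-norm continuity is
expressed as: for every r, the restriction of f^t to the image in the weak* dual of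
the closed ball of radius r is continuous into the norm topology. -/
theorem compactHL_iff_transpose_bwstar_norm_continuous {X Y G : Type*}
    [NormedAddCommGroup X] [NormedSpace ℂ X] [CompleteSpace X]
    [NormedAddCommGroup Y] [NormedSpace ℂ Y] [CompleteSpace Y]
    [NormedAddCommGroup G] [NormedSpace ℂ G] [CompleteSpace G]
    (δX : X → G) (hδ : MemHL δX)
    (hdense : Dense (Submodule.span ℂ (δX '' ball (0 : X) 1) : Set G))
    (linC : (X → ℂ) → (G →L[ℂ] ℂ))
    (hlinC : ∀ g : X → ℂ, MemHL g → ∀ x ∈ ball (0 : X) 1, linC g (δX x) = g x)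
    (hlinCnorm : ∀ g : X → ℂ, MemHL g → ‖linC g‖ = LipNorm g)
    (f : X → Y) (hf : MemHL f) :
    IsCompact (closure (LipImage f)) ↔
      ∀ r : ℝ, ContinuousOn (fun φ : WeakDual ℂ Y => linC (fun x => φ (f x)))
        (StrongDual.toWeakDual '' closedBall (0 : StrongDual ℂ Y) r) :=
  compactHL_iff_transpose_bwstar_norm_continuous_general δX hdense linC hlinC hlinCnorm f hf
end
end

section
/- Let X be a finite dimensional complex Banach space and Y a complex Banach space. If f ∈ Hl₀(B_X, Y) (vector-valued little holomorphic Lipschitz map), then the transpose f^t : Y* → Hl₀(B_X), f^t(y*) = y* ∘ f, is a compact linear operator and maps the closed unit ball of Y* into a relatively compact subset of Hl₀(B_X). -/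
/-!
Let `K ⊆ Y` be the set of difference quotients `‖x - y‖⁻¹ • (f x - f y)` of `f` on `B_X`. It is
totally bounded: quotients over pairs with `‖x - y‖ < δ` are uniformly small because `f` is little
Lipschitz, and on the pairs with `‖x - y‖ ≥ δ` the quotient is a Lipschitz function on a bounded
subset of the finite dimensional space `X × X`. The norm of `f^t φ - f^t ψ` is the Lipschitz
constant of `(φ - ψ) ∘ f`, i.e. `sup_{v ∈ K} ‖(φ - ψ) v‖`. As in the Arzelà–Ascoli theorem, the
dual unit ball is totally bounded for uniform convergence on a totally bounded set (restrict to a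
finite net of `K`, where it becomes a bounded set of `𝕜^n`), so `f^t` maps the dual unit ball onto
a totally bounded subset of the complete space `G →L[ℂ] ℂ`.
-/

open Metric Set Filter Topology

noncomputable section

/-- Membership in the little holomorphic Lipschitz space Hl₀. -/
def MemHl {X Y : Type*} [NormedAddCommGroup X] [NormedSpace ℂ X]
    [NormedAddCommGroup Y] [NormedSpace ℂ Y] (f : X → Y) : Prop :=
  MemHL f ∧ ∀ ε > (0 : ℝ), ∃ δ > (0 : ℝ), ∀ x ∈ ball (0 : X) 1, ∀ y ∈ ball (0 : X) 1,
    ‖x - y‖ < δ → ‖f x - f y‖ ≤ ε * ‖x - y‖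

theorem TotallyBounded.image_of_uniformContinuousOn {α β : Type*} [UniformSpace α]
    [UniformSpace β] {f : α → β} {s : Set α} (hs : TotallyBounded s)
    (hf : UniformContinuousOn f s) : TotallyBounded (f '' s) := by
  have hs' : TotallyBounded (univ : Set s) :=
    (totallyBounded_image_iff isUniformEmbedding_subtype_val.isUniformInducing).1
      (by rwa [image_univ, Subtype.range_coe])
  simpa only [image_univ, range_domRestrict] using hs'.image (uniformContinuousOn_iff_restrict.1 hf)

theorem Metric.totallyBounded_of_forall_subset_ball_union {α : Type*} [PseudoMetricSpace α]
    {s : Set α} (h : ∀ ε > 0, ∃ c, ∃ t, TotallyBounded t ∧ s ⊆ ball c ε ∪ t) :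
    TotallyBounded s := by
  refine Metric.totallyBounded_iff.2 fun ε hε => ?_
  obtain ⟨c, t, ht, hst⟩ := h ε hε
  obtain ⟨u, hu, htu⟩ := Metric.totallyBounded_iff.1 ht ε hε
  refine ⟨insert c u, hu.insert c, hst.trans ?_⟩
  rw [biUnion_insert]
  exact union_subset_union_right _ htu

theorem norm_inv_smul_sub_inv_smul_le {E : Type*} [SeminormedAddCommGroup E] [NormedSpace ℝ E]
    {a b δ C : ℝ} {v w : E} (hδ : 0 < δ) (ha : δ ≤ a) (hb : δ ≤ b) (hw : ‖w‖ ≤ C * b) :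
    ‖a⁻¹ • v - b⁻¹ • w‖ ≤ δ⁻¹ * (‖v - w‖ + C * |a - b|) := by
  have ha0 : 0 < a := hδ.trans_le ha
  have hb0 : 0 < b := hδ.trans_le hb
  have hC : 0 ≤ C := nonneg_of_mul_nonneg_left ((norm_nonneg w).trans hw) hb0
  have hsplit : a⁻¹ • v - b⁻¹ • w = a⁻¹ • (v - w) + (a⁻¹ - b⁻¹) • w := by module
  have hcoef : |a⁻¹ - b⁻¹| * b = |a - b| * a⁻¹ := by
    rw [inv_sub_inv ha0.ne' hb0.ne', abs_div, abs_sub_comm, abs_of_pos (mul_pos ha0 hb0)]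
    field_simp
  calc ‖a⁻¹ • v - b⁻¹ • w‖ ≤ a⁻¹ * ‖v - w‖ + |a⁻¹ - b⁻¹| * ‖w‖ := by
        rw [hsplit]
        refine (norm_add_le _ _).trans_eq ?_
        rw [norm_smul, norm_smul, Real.norm_eq_abs, Real.norm_eq_abs, abs_of_pos (inv_pos.2 ha0)]
    _ ≤ a⁻¹ * ‖v - w‖ + C * (|a - b| * a⁻¹) := by
        rw [← hcoef]
        nlinarith [abs_nonneg (a⁻¹ - b⁻¹)]
    _ ≤ δ⁻¹ * ‖v - w‖ + C * (|a - b| * δ⁻¹) := by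
        gcongr
    _ = δ⁻¹ * (‖v - w‖ + C * |a - b|) := by ring

section DiffQuot

variable {X Y : Type*} [SeminormedAddCommGroup X] [SeminormedAddCommGroup Y] [NormedSpace ℝ Y]

def diffQuot (f : X → Y) (p : X × X) : Y := ‖p.1 - p.2‖⁻¹ • (f p.1 - f p.2)

theorem lipschitzOnWith_diffQuot {f : X → Y} {C : NNReal} {s : Set X} {δ : ℝ} (hδ : 0 < δ)
    (hf : LipschitzOnWith C f s) :
    LipschitzOnWith (Real.toNNReal (4 * C / δ)) (diffQuot f)
      {p | p.1 ∈ s ∧ p.2 ∈ s ∧ δ ≤ ‖p.1 - p.2‖} := by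
  refine LipschitzOnWith.of_dist_le' ?_
  rintro ⟨x, y⟩ ⟨hx, hy, hxy⟩ ⟨x', y'⟩ ⟨hx', hy', hxy'⟩
  have hd : ‖x - x'‖ + ‖y - y'‖ ≤ 2 * dist (x, y) (x', y') := by
    rw [← dist_eq_norm, ← dist_eq_norm, Prod.dist_eq]
    linarith [le_max_left (dist x x') (dist y y'), le_max_right (dist x x') (dist y y')]
  have hnum : ‖(f x - f y) - (f x' - f y')‖ ≤ C * (‖x - x'‖ + ‖y - y'‖) := by
    calc ‖(f x - f y) - (f x' - f y')‖ = ‖(f x - f x') - (f y - f y')‖ := by congr 1; abel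
      _ ≤ ‖f x - f x'‖ + ‖f y - f y'‖ := norm_sub_le _ _
      _ ≤ C * ‖x - x'‖ + C * ‖y - y'‖ := by
          gcongr
          · simpa only [dist_eq_norm] using hf.dist_le_mul x hx x' hx'
          · simpa only [dist_eq_norm] using hf.dist_le_mul y hy y' hy'
      _ = C * (‖x - x'‖ + ‖y - y'‖) := by ring
  have hden : |‖x - y‖ - ‖x' - y'‖| ≤ ‖x - x'‖ + ‖y - y'‖ := by
    calc |‖x - y‖ - ‖x' - y'‖| ≤ ‖(x - y) - (x' - y')‖ := abs_norm_sub_norm_le _ _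
      _ = ‖(x - x') - (y - y')‖ := by congr 1; abel
      _ ≤ ‖x - x'‖ + ‖y - y'‖ := norm_sub_le _ _
  have hval : ‖f x' - f y'‖ ≤ C * ‖x' - y'‖ := by
    simpa only [dist_eq_norm] using hf.dist_le_mul x' hx' y' hy'
  rw [dist_eq_norm]
  calc ‖diffQuot f (x, y) - diffQuot f (x', y')‖
      ≤ δ⁻¹ * (‖(f x - f y) - (f x' - f y')‖ + C * |‖x - y‖ - ‖x' - y'‖|) :=
        norm_inv_smul_sub_inv_smul_le hδ hxy hxy' hval
    _ ≤ δ⁻¹ * (C * (‖x - x'‖ + ‖y - y'‖) + C * (‖x - x'‖ + ‖y - y'‖)) := by gcongr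
    _ ≤ 4 * C / δ * dist (x, y) (x', y') := by
        rw [div_eq_inv_mul, mul_assoc]
        gcongr
        linarith [mul_le_mul_of_nonneg_left hd C.coe_nonneg]

end DiffQuot

theorem TotallyBounded.exists_finite_dual_uniform_approx {𝕜 E : Type*}
    [NontriviallyNormedField 𝕜] [ProperSpace 𝕜] [SeminormedAddCommGroup E] [NormedSpace 𝕜 E]
    {K : Set E} (hK : TotallyBounded K) {ε : ℝ} (hε : 0 < ε) :
    ∃ F ⊆ closedBall (0 : E →L[𝕜] 𝕜) 1, F.Finite ∧
      ∀ φ ∈ closedBall (0 : E →L[𝕜] 𝕜) 1, ∃ ψ ∈ F, ∀ v ∈ K, ‖φ v - ψ v‖ < ε := by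
  obtain ⟨t, htfin, hKt⟩ := Metric.totallyBounded_iff.1 hK (ε / 4) (by positivity)
  have : Fintype t := htfin.fintype
  let Φ : (E →L[𝕜] 𝕜) →L[𝕜] (t → 𝕜) :=
    ContinuousLinearMap.pi fun v => ContinuousLinearMap.apply 𝕜 𝕜 (v : E)
  have hΦ : TotallyBounded (Φ '' closedBall 0 1) :=
    ((Φ.lipschitz.isBounded_image isBounded_closedBall).isCompact_closure).totallyBounded.subset
      subset_closure
  obtain ⟨F, hFB, hFfin, hF⟩ := exists_subset_image_finite_and.1
    (finite_approx_of_totallyBounded hΦ (ε / 4) (by positivity))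
  refine ⟨F, hFB, hFfin, fun φ hφ => ?_⟩
  obtain ⟨_, ⟨ψ, hψF, rfl⟩, hφψ⟩ := mem_iUnion₂.1 (hF (mem_image_of_mem Φ hφ))
  refine ⟨ψ, hψF, fun v hv => ?_⟩
  obtain ⟨w, hwt, hvw⟩ := mem_iUnion₂.1 (hKt hv)
  have hw : ‖φ w - ψ w‖ < ε / 4 := by
    rw [← dist_eq_norm]
    exact (dist_le_pi_dist (Φ φ) (Φ ψ) ⟨w, hwt⟩).trans_lt hφψ
  have hφψ_norm : ‖φ - ψ‖ ≤ 2 := by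
    rw [mem_closedBall_zero_iff] at hφ
    have hψ := mem_closedBall_zero_iff.1 (hFB hψF)
    linarith [norm_sub_le φ ψ]
  have hvw' : ‖v - w‖ < ε / 4 := by rwa [← dist_eq_norm]
  calc ‖φ v - ψ v‖ = ‖(φ - ψ) (v - w) + (φ w - ψ w)‖ := by
        simp only [sub_apply, map_sub]
        abel_nf
    _ ≤ ‖φ - ψ‖ * ‖v - w‖ + ‖φ w - ψ w‖ := norm_add_le_of_le ((φ - ψ).le_opNorm _) le_rfl
    _ < 2 * (ε / 4) + ε / 4 := by
        exact add_lt_add_of_le_of_lt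
          (mul_le_mul hφψ_norm hvw'.le (norm_nonneg _) zero_le_two) hw
    _ < ε := by linarith

section LittleLipschitz

variable {X Y : Type*} [NormedAddCommGroup X] [NormedSpace ℂ X]
  [NormedAddCommGroup Y] [NormedSpace ℂ Y]

theorem MemHL.exists_lipschitzOnWith {f : X → Y} (hf : MemHL f) :
    ∃ C, LipschitzOnWith C f (ball 0 1) := by
  obtain ⟨-, -, C, hC⟩ := hf
  exact ⟨_, LipschitzOnWith.of_dist_le' fun x hx y hy => by
    simpa only [dist_eq_norm] using hC x hx y hy⟩

theorem MemHL.comp_clm {f : X → Y} (hf : MemHL f) (θ : Y →L[ℂ] ℂ) :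
    MemHL fun x => θ (f x) := by
  obtain ⟨h0, hdiff, C, hC⟩ := hf
  refine ⟨by simp [h0], θ.differentiable.comp_differentiableOn hdiff, ‖θ‖ * C,
    fun x hx y hy => ?_⟩
  calc ‖θ (f x) - θ (f y)‖ ≤ ‖θ‖ * ‖f x - f y‖ := by rw [← map_sub]; exact θ.le_opNorm _
    _ ≤ ‖θ‖ * (C * ‖x - y‖) := by gcongr; exact hC x hx y hy
    _ = ‖θ‖ * C * ‖x - y‖ := by ring

theorem MemHl.comp_clm {f : X → Y} (hf : MemHl f) (θ : Y →L[ℂ] ℂ) :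
    MemHl fun x => θ (f x) := by
  refine ⟨hf.1.comp_clm θ, fun ε hε => ?_⟩
  obtain ⟨δ, hδ, hsmall⟩ := hf.2 (ε / (‖θ‖ + 1)) (by positivity)
  refine ⟨δ, hδ, fun x hx y hy hxy => ?_⟩
  have hθ : ‖θ‖ * (ε / (‖θ‖ + 1)) ≤ ε := by
    rw [mul_div_assoc', div_le_iff₀ (by positivity)]
    nlinarith [norm_nonneg θ]
  calc ‖θ (f x) - θ (f y)‖ ≤ ‖θ‖ * ‖f x - f y‖ := by rw [← map_sub]; exact θ.le_opNorm _
    _ ≤ ‖θ‖ * (ε / (‖θ‖ + 1) * ‖x - y‖) := by gcongr; exact hsmall x hx y hy hxy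
    _ ≤ ε * ‖x - y‖ := by rw [← mul_assoc]; gcongr

theorem lipNorm_le {g : X → Y} {b : ℝ} (hb : 0 ≤ b)
    (h : ∀ x ∈ ball (0 : X) 1, ∀ y ∈ ball (0 : X) 1, x ≠ y → ‖g x - g y‖ ≤ b * ‖x - y‖) :
    LipNorm g ≤ b := by
  refine Real.sSup_le ?_ hb
  rintro _ ⟨p, ⟨hp₁, hp₂, hne⟩, rfl⟩
  rw [div_le_iff₀ (norm_pos_iff.2 (sub_ne_zero_of_ne hne))]
  exact h _ hp₁ _ hp₂ hne

theorem lipNorm_comp_le_of_forall_mem_lipImage {f : X → Y} {θ : Y →L[ℂ] ℂ} {b : ℝ} (hb : 0 ≤ b)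
    (h : ∀ v ∈ LipImage f, ‖θ v‖ ≤ b) : LipNorm (fun x => θ (f x)) ≤ b := by
  refine lipNorm_le hb fun x hx y hy hne => ?_
  have hxy : 0 < ‖x - y‖ := norm_pos_iff.2 (sub_ne_zero_of_ne hne)
  have hv := h _ ⟨x, hx, y, hy, hne, rfl⟩
  rw [θ.map_smul_of_tower, norm_smul, norm_inv, norm_norm, inv_mul_le_iff₀ hxy, map_sub] at hv
  rwa [mul_comm]

theorem MemHl.totallyBounded_lipImage [FiniteDimensional ℂ X] {f : X → Y} (hf : MemHl f) :
    TotallyBounded (LipImage f) := by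
  obtain ⟨C, hC⟩ := hf.1.exists_lipschitzOnWith
  refine Metric.totallyBounded_of_forall_subset_ball_union fun ε hε => ?_
  obtain ⟨δ, hδ, hsmall⟩ := hf.2 (ε / 2) (half_pos hε)
  set A := {p : X × X | p.1 ∈ ball 0 1 ∧ p.2 ∈ ball 0 1 ∧ δ ≤ ‖p.1 - p.2‖}
  have hA : TotallyBounded A := by
    refine .subset (s₂ := closedBall 0 1 ×ˢ closedBall 0 1) (fun p hp => ?_)
      ((isCompact_closedBall 0 1).prod (isCompact_closedBall 0 1)).totallyBounded
    exact ⟨ball_subset_closedBall hp.1, ball_subset_closedBall hp.2.1⟩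
  refine ⟨0, diffQuot f '' A,
    hA.image_of_uniformContinuousOn (lipschitzOnWith_diffQuot hδ hC).uniformContinuousOn, ?_⟩
  rintro _ ⟨x, hx, y, hy, hne, rfl⟩
  by_cases hxy : δ ≤ ‖x - y‖
  · exact Or.inr ⟨(x, y), ⟨hx, hy, hxy⟩, rfl⟩
  · have hpos : 0 < ‖x - y‖ := norm_pos_iff.2 (sub_ne_zero_of_ne hne)
    left
    rw [mem_ball_zero_iff, norm_smul, norm_inv, norm_norm, inv_mul_lt_iff₀ hpos]
    linarith [hsmall x hx y hy (not_le.1 hxy), mul_lt_mul_of_pos_right (half_lt_self hε) hpos]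

end LittleLipschitz

/-- `Hl₀(B_X)` is identified with a subspace of `G₀(B_X)*` through the canonical isometry `Λ_X`,
which is hypothesized through `linC`; `δX` plays the role of the evaluations `x ↦ δ_x`. -/
theorem littleHL_transpose_compact_general {X Y G : Type*}
    [NormedAddCommGroup X] [NormedSpace ℂ X] [FiniteDimensional ℂ X]
    [NormedAddCommGroup Y] [NormedSpace ℂ Y]
    [NormedAddCommGroup G] [NormedSpace ℂ G]
    (δX : X → G)
    (hdense : Dense (Submodule.span ℂ (δX '' ball (0 : X) 1) : Set G))
    (linC : (X → ℂ) → (G →L[ℂ] ℂ))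
    (hlinC : ∀ g : X → ℂ, MemHL g → ∀ x ∈ ball (0 : X) 1, linC g (δX x) = g x)
    (hlinCnorm : ∀ g : X → ℂ, MemHL g → ‖linC g‖ = LipNorm g)
    (f : X → Y) (hf : MemHl f) :
    (∀ φ : Y →L[ℂ] ℂ, MemHl (fun x => φ (f x))) ∧
    IsCompactOperator (fun φ : Y →L[ℂ] ℂ => linC (fun x => φ (f x))) ∧
    IsCompact (closure ((fun φ : Y →L[ℂ] ℂ => linC (fun x => φ (f x))) ''
      closedBall (0 : Y →L[ℂ] ℂ) 1)) := by
  set T := fun φ : Y →L[ℂ] ℂ => linC (fun x => φ (f x)) with hT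
  have hT_sub (φ ψ : Y →L[ℂ] ℂ) : T φ - T ψ = T (φ - ψ) := by
    refine ContinuousLinearMap.ext_on hdense ?_
    rintro _ ⟨x, hx, rfl⟩
    rw [sub_apply, hT, hlinC _ (hf.1.comp_clm φ) x hx,
      hlinC _ (hf.1.comp_clm ψ) x hx, hlinC _ (hf.1.comp_clm (φ - ψ)) x hx]
    rfl
  have hT_tb : TotallyBounded (T '' closedBall 0 1) := by
    refine Metric.totallyBounded_iff.2 fun ε hε => ?_
    obtain ⟨F, -, hFfin, hF⟩ :=
      hf.totallyBounded_lipImage.exists_finite_dual_uniform_approx (𝕜 := ℂ) (half_pos hε)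
    refine ⟨T '' F, hFfin.image T, ?_⟩
    rintro _ ⟨φ, hφ, rfl⟩
    obtain ⟨ψ, hψF, hψ⟩ := hF φ hφ
    refine mem_biUnion (mem_image_of_mem T hψF) ?_
    rw [mem_ball, dist_eq_norm, hT_sub, hlinCnorm _ (hf.1.comp_clm _)]
    exact (lipNorm_comp_le_of_forall_mem_lipImage (half_pos hε).le
      fun v hv => (hψ v hv).le).trans_lt (half_lt_self hε)
  have hK : IsCompact (closure (T '' closedBall 0 1)) :=
    hT_tb.closure.isCompact_of_isClosed isClosed_closure
  exact ⟨hf.comp_clm, (isCompactOperator_iff_exists_mem_nhds_isCompact_closure_image T).2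
    ⟨_, closedBall_mem_nhds 0 one_pos, hK⟩, hK⟩

/-- for X finite dimensional and f ∈ Hl₀(B_X, Y), the transpose
f^t : Y* → Hl₀(B_X), y* ↦ y* ∘ f, takes values in Hl₀(B_X), is a compact linear
operator, and maps the closed unit ball of Y* onto a relatively compact set.
Hl₀(B_X) ⊆ HL₀(B_X) is identified inside G₀(B_X)* via the canonical isometric
isomorphism Λ_X, hypothesized through linC. -/
theorem littleHL_transpose_compact {X Y G : Type*}
    [NormedAddCommGroup X] [NormedSpace ℂ X] [FiniteDimensional ℂ X]
    [NormedAddCommGroup Y] [NormedSpace ℂ Y] [CompleteSpace Y]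
    [NormedAddCommGroup G] [NormedSpace ℂ G] [CompleteSpace G]
    (δX : X → G) (hδ : MemHL δX)
    (hdense : Dense (Submodule.span ℂ (δX '' ball (0 : X) 1) : Set G))
    (linC : (X → ℂ) → (G →L[ℂ] ℂ))
    (hlinC : ∀ g : X → ℂ, MemHL g → ∀ x ∈ ball (0 : X) 1, linC g (δX x) = g x)
    (hlinCnorm : ∀ g : X → ℂ, MemHL g → ‖linC g‖ = LipNorm g)
    (f : X → Y) (hf : MemHl f) :
    (∀ φ : Y →L[ℂ] ℂ, MemHl (fun x => φ (f x))) ∧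
    IsCompactOperator (fun φ : Y →L[ℂ] ℂ => linC (fun x => φ (f x))) ∧
    IsCompact (closure ((fun φ : Y →L[ℂ] ℂ => linC (fun x => φ (f x))) ''
      closedBall (0 : Y →L[ℂ] ℂ) 1)) :=
  littleHL_transpose_compact_general δX hdense linC hlinC hlinCnorm f hf
end
end
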